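/- Let o be the ring of integers of a number field, a₁ a fractional ideal, c a nonzero ideal, and c ∈ c⁻¹ nonzero. If x ∈ (a₁c⁻¹/a₁c)^× is a generator of the cyclic o-module a₁c⁻¹/a₁c, then there exists a unique element x⁻¹ in (a₁⁻¹c/a₁⁻¹c·c²)^× such that x·x⁻¹ ∈ 1 + c·c. -/

import Mathlib

open scoped Pointwise
open FractionalIdeal

/-- Existence and uniqueness of the "inverse" `x⁻¹` in the definition of Kloosterman
sums: let `R` be the ring of integers of a number field (formalized: a Dedekind domain)
with fraction field `F`, `a₁` a nonzero fractional ideal, `𝔠` a nonzero integral ideal,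
and `0 ≠ c ∈ 𝔠⁻¹`. If `x ∈ a₁𝔠⁻¹` generates the cyclic `R`-module `a₁𝔠⁻¹/(c·a₁)`, then
there is an element `y ∈ a₁⁻¹𝔠`, generating `a₁⁻¹𝔠/(c·a₁⁻¹𝔠²)` with `x·y ∈ 1 + c𝔠`,
and `y` is unique modulo `c·a₁⁻¹𝔠²` (i.e. unique as an element of the quotient). -/
theorem kloosterman_inverse_exists_unique
    (R : Type*) [CommRing R] [IsDedekindDomain R]
    (F : Type*) [Field F] [Algebra R F] [IsFractionRing R F]
    (a₁ : FractionalIdeal (nonZeroDivisors R) F) (ha₁ : a₁ ≠ 0)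
    (𝔠 : Ideal R) (h𝔠 : 𝔠 ≠ 0)
    (c : F) (hc0 : c ≠ 0) (hc : c ∈ ((𝔠 : FractionalIdeal (nonZeroDivisors R) F))⁻¹)
    (x : F) (hx : x ∈ a₁ * ((𝔠 : FractionalIdeal (nonZeroDivisors R) F))⁻¹)
    (hxgen : Submodule.span R {x} ⊔ c • (a₁ : Submodule R F)
      = ((a₁ * ((𝔠 : FractionalIdeal (nonZeroDivisors R) F))⁻¹ :
          FractionalIdeal (nonZeroDivisors R) F) : Submodule R F)) :
    ∃ y ∈ (a₁⁻¹ * (𝔠 : FractionalIdeal (nonZeroDivisors R) F) :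
        FractionalIdeal (nonZeroDivisors R) F),
      (Submodule.span R {y} ⊔
          c • ((a₁⁻¹ * (𝔠 : FractionalIdeal (nonZeroDivisors R) F) ^ 2 :
            FractionalIdeal (nonZeroDivisors R) F) : Submodule R F)
        = ((a₁⁻¹ * (𝔠 : FractionalIdeal (nonZeroDivisors R) F) :
            FractionalIdeal (nonZeroDivisors R) F) : Submodule R F)) ∧
      x * y - 1 ∈ c • (((𝔠 : FractionalIdeal (nonZeroDivisors R) F)) : Submodule R F) ∧
      ∀ y' ∈ (a₁⁻¹ * (𝔠 : FractionalIdeal (nonZeroDivisors R) F) :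
          FractionalIdeal (nonZeroDivisors R) F),
        (Submodule.span R {y'} ⊔
            c • ((a₁⁻¹ * (𝔠 : FractionalIdeal (nonZeroDivisors R) F) ^ 2 :
              FractionalIdeal (nonZeroDivisors R) F) : Submodule R F)
          = ((a₁⁻¹ * (𝔠 : FractionalIdeal (nonZeroDivisors R) F) :
              FractionalIdeal (nonZeroDivisors R) F) : Submodule R F)) →
        x * y' - 1 ∈ c • (((𝔠 : FractionalIdeal (nonZeroDivisors R) F)) : Submodule R F) →
        y' - y ∈ c • ((a₁⁻¹ * (𝔠 : FractionalIdeal (nonZeroDivisors R) F) ^ 2 :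
          FractionalIdeal (nonZeroDivisors R) F) : Submodule R F) := by
  set K : FractionalIdeal (nonZeroDivisors R) F := (𝔠 : FractionalIdeal (nonZeroDivisors R) F)
    with hKdef
  have hK0 : K ≠ 0 := by simpa [hKdef] using h𝔠
  have hKK : K * K⁻¹ = 1 := mul_inv_cancel₀ hK0
  have hAA : a₁ * a₁⁻¹ = 1 := mul_inv_cancel₀ ha₁
  set C : FractionalIdeal (nonZeroDivisors R) F := spanSingleton (nonZeroDivisors R) c with hCdef
  have hsm : ∀ I : FractionalIdeal (nonZeroDivisors R) F,
      ((C * I : FractionalIdeal (nonZeroDivisors R) F) : Submodule R F)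
        = c • (I : Submodule R F) := fun I => by
    rw [coe_mul, hCdef, coe_spanSingleton, Submodule.span_singleton_mul]
  set X : FractionalIdeal (nonZeroDivisors R) F := spanSingleton (nonZeroDivisors R) x with hXdef
  -- the generation hypothesis as a fractional-ideal equation
  have hgen : X + C * a₁ = a₁ * K⁻¹ := by
    apply coeToSubmodule_injective
    dsimp only
    rw [coe_add, Submodule.add_eq_sup, hsm, hXdef, coe_spanSingleton]
    exact hxgen
  -- 1 = X * (a₁⁻¹ * K) + C * K
  have h1 : X * (a₁⁻¹ * K) + C * K = 1 := by
    have e1 : C * a₁ * (a₁⁻¹ * K) = C * K := by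
      rw [show C * a₁ * (a₁⁻¹ * K) = C * K * (a₁ * a₁⁻¹) by ring, hAA, mul_one]
    calc X * (a₁⁻¹ * K) + C * K = (X + C * a₁) * (a₁⁻¹ * K) := by rw [add_mul, e1]
      _ = a₁ * K⁻¹ * (a₁⁻¹ * K) := by rw [hgen]
      _ = (a₁ * a₁⁻¹) * (K * K⁻¹) := by ring
      _ = 1 := by rw [hAA, hKK, mul_one]
  -- extract y
  have hone : (1 : F) ∈ ((X * (a₁⁻¹ * K) + C * K :
      FractionalIdeal (nonZeroDivisors R) F) : Submodule R F) := by
    rw [h1]; exact one_mem_one _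
  rw [coe_add, Submodule.add_eq_sup] at hone
  obtain ⟨u, hu, v, hv, huv⟩ := Submodule.mem_sup.mp hone
  rw [coe_mul, hXdef, coe_spanSingleton] at hu
  obtain ⟨y, hy, hxy⟩ := Submodule.mem_span_singleton_mul.mp hu
  rw [hsm] at hv
  have hyB : y ∈ a₁⁻¹ * K := mem_coe.mp hy
  have hcong : x * y - 1 ∈ c • (K : Submodule R F) := by
    have : x * y - 1 = -v := by rw [hxy]; linear_combination huv
    rw [this]; exact neg_mem hv
  -- generation property for y
  have hgeny : ∀ z ∈ a₁⁻¹ * K, x * z - 1 ∈ c • (K : Submodule R F) →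
      spanSingleton (nonZeroDivisors R) z + C * (a₁⁻¹ * K ^ 2) = a₁⁻¹ * K := by
    intro z hz hcz
    set Z : FractionalIdeal (nonZeroDivisors R) F := spanSingleton (nonZeroDivisors R) z
    have h1z : Z * (a₁ * K⁻¹) + C * K = 1 := by
      apply le_antisymm
      · apply sup_le
        · calc Z * (a₁ * K⁻¹) ≤ (a₁⁻¹ * K) * (a₁ * K⁻¹) :=
              mul_left_mono (a := a₁ * K⁻¹) (spanSingleton_le_iff_mem.mpr hz)
            _ = (a₁ * a₁⁻¹) * (K * K⁻¹) := by ring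
            _ = 1 := by rw [hAA, hKK, mul_one]
        · calc C * K ≤ K⁻¹ * K :=
              mul_left_mono (a := K) (spanSingleton_le_iff_mem.mpr hc)
            _ = 1 := by rw [mul_comm, hKK]
      · rw [← spanSingleton_one (S := nonZeroDivisors R), spanSingleton_le_iff_mem]
        have h1mem : (1 : F) ∈ ((Z * (a₁ * K⁻¹) + C * K :
            FractionalIdeal (nonZeroDivisors R) F) : Submodule R F) := by
          rw [coe_add, Submodule.add_eq_sup]
          refine Submodule.mem_sup.mpr ⟨x * z, ?_, 1 - x * z, ?_, by ring⟩
          · rw [coe_mul, coe_spanSingleton, mul_comm x z]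
            exact Submodule.mem_span_singleton_mul.mpr ⟨x, mem_coe.mpr hx, rfl⟩
          · rw [hsm]
            simpa using neg_mem hcz
        exact mem_coe.mp h1mem
    -- multiply by a₁⁻¹ * K
    have := congrArg (· * (a₁⁻¹ * K)) h1z
    simp only [add_mul, one_mul] at this
    calc Z + C * (a₁⁻¹ * K ^ 2)
        = Z * (a₁ * K⁻¹) * (a₁⁻¹ * K) + C * K * (a₁⁻¹ * K) := by
          congr 1
          · rw [show Z * (a₁ * K⁻¹) * (a₁⁻¹ * K) = Z * ((a₁ * a₁⁻¹) * (K * K⁻¹)) by ring,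
              hAA, hKK, mul_one, mul_one]
          · ring
      _ = a₁⁻¹ * K := this
  have hygen := hgeny y hyB hcong
  -- uniqueness
  refine ⟨y, hyB, ?_, hcong, ?_⟩
  · have := congrArg (fun I : FractionalIdeal (nonZeroDivisors R) F => (I : Submodule R F)) hygen
    rw [coe_add, Submodule.add_eq_sup, hsm, coe_spanSingleton] at this
    exact this
  · intro y' hy' _ hcz'
    set d := y' - y with hd
    have hdB : d ∈ a₁⁻¹ * K := mem_coe.mp (sub_mem (mem_coe.mpr hy') (mem_coe.mpr hyB))
    have hxd : x * d ∈ C * K := by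
      have : x * d = (x * y' - 1) - (x * y - 1) := by rw [hd]; ring
      rw [this]
      exact mem_coe.mp (by rw [hsm]; exact sub_mem hcz' hcong)
    set D : FractionalIdeal (nonZeroDivisors R) F := spanSingleton (nonZeroDivisors R) d
    have hDle : D * (a₁ * K⁻¹) ≤ C * K := by
      rw [← hgen, mul_add]
      apply sup_le
      · rw [show D * X = spanSingleton (nonZeroDivisors R) (x * d) by
          rw [hXdef, spanSingleton_mul_spanSingleton, mul_comm]]
        exact spanSingleton_le_iff_mem.mpr hxd
      · calc D * (C * a₁) = C * (D * a₁) := by ring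
          _ ≤ C * ((a₁⁻¹ * K) * a₁) :=
            mul_right_mono (a := C) (mul_left_mono (a := a₁) (spanSingleton_le_iff_mem.mpr hdB))
          _ = C * (K * (a₁ * a₁⁻¹)) := by ring
          _ = C * K := by rw [hAA, mul_one]
    have hDle2 : D ≤ C * (a₁⁻¹ * K ^ 2) := by
      calc D = D * (a₁ * K⁻¹) * (a₁⁻¹ * K) := by
            rw [show D * (a₁ * K⁻¹) * (a₁⁻¹ * K) = D * ((a₁ * a₁⁻¹) * (K * K⁻¹)) by ring,
              hAA, hKK, mul_one, mul_one]
        _ ≤ C * K * (a₁⁻¹ * K) := mul_left_mono (a := a₁⁻¹ * K) hDle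
        _ = C * (a₁⁻¹ * K ^ 2) := by ring
    have : d ∈ C * (a₁⁻¹ * K ^ 2) := spanSingleton_le_iff_mem.mp hDle2
    rw [← hsm]
    exact mem_coe.mpr this
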